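/- arXiv:2008.03751 — 10 statements merged into one kernel-verified Lean document; each statement's English description precedes it below -/
import Mathlib

section
/- Let ω < 0, 0 < α ≤ 1 and 0 < αγ ≤ β ≤ 1. If β − αγ > 0, then Λ(θ) → 0 as θ → 0⁺; if β − αγ = 0, then Λ(θ) → |ω|^γ as θ → 0⁺. -/
open Real Complex Filter Set Topology

/-- The curve parametrization Λ(θ) bounding the stability region. -/
noncomputable def Lam (α β γ ω : ℝ) (θ : ℝ) : ℂ :=
  ((|ω| ^ (β / α) * Real.sin θ ^ (β / α - γ) * Real.sin (α * π / 2) ^ γ *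
      Real.sin (α * π / 2 - θ) ^ (-(β / α)) : ℝ) : ℂ) *
    Complex.exp (Complex.I * ((γ * θ + (β - α * γ) * π / 2 : ℝ) : ℂ))

/-- The characteristic function F(s) = s^(β-αγ) (s^α - ω)^γ (principal branches). -/
noncomputable def Fc (α β γ ω : ℝ) (s : ℂ) : ℂ :=
  s ^ ((β - α * γ : ℝ) : ℂ) * (s ^ ((α : ℝ) : ℂ) - (ω : ℂ)) ^ ((γ : ℝ) : ℂ)

/-- μ(θ) = (|ω| sin θ / sin(απ/2 - θ))^(1/α). -/
noncomputable def muP (α ω : ℝ) (θ : ℝ) : ℝ :=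
  (|ω| * Real.sin θ / Real.sin (α * π / 2 - θ)) ^ (1 / α)

/-- ρ(θ) = |ω| sin(απ/2) / sin(απ/2 - θ). -/
noncomputable def rhoP (α ω : ℝ) (θ : ℝ) : ℝ :=
  |ω| * Real.sin (α * π / 2) / Real.sin (α * π / 2 - θ)


theorem lam_limit_at_zero (α β γ ω : ℝ) (hω : ω < 0) (hα0 : 0 < α) (hα1 : α ≤ 1)
    (hαγ : 0 < α * γ) (hβ0 : α * γ ≤ β) (hβ1 : β ≤ 1) :
    (0 < β - α * γ → Tendsto (Lam α β γ ω) (𝓝[>] 0) (𝓝 0)) ∧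
    (β - α * γ = 0 →
      Tendsto (Lam α β γ ω) (𝓝[>] 0) (𝓝 ((|ω| ^ γ : ℝ) : ℂ))) := by
  have hπ := Real.pi_pos
  have hsin : 0 < Real.sin (α * π / 2) := by
    apply Real.sin_pos_of_pos_of_lt_pi
    · positivity
    · nlinarith
  have hexp : ContinuousAt (fun θ : ℝ =>
      Complex.exp (Complex.I * ((γ * θ + (β - α * γ) * π / 2 : ℝ) : ℂ))) 0 := by
    fun_prop
  have h2 : ∀ p : ℝ, ContinuousAt (fun θ : ℝ => Real.sin (α * π / 2 - θ) ^ p) 0 := by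
    intro p
    have hb : ContinuousAt (fun θ : ℝ => Real.sin (α * π / 2 - θ)) 0 := by fun_prop
    exact hb.rpow_const (Or.inl (by simpa using hsin.ne'))
  constructor
  · intro hp
    have hpa : 0 < β / α - γ := by
      rw [sub_pos, lt_div_iff₀ hα0]
      nlinarith
    have h1 : ContinuousAt (fun θ : ℝ => Real.sin θ ^ (β / α - γ)) 0 :=
      Real.continuous_sin.continuousAt.rpow_const (Or.inr hpa.le)
    have hc : ContinuousAt (Lam α β γ ω) 0 := by
      unfold Lam
      exact ((Complex.continuous_ofReal.continuousAt.comp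
        (((continuousAt_const.mul h1).mul continuousAt_const).mul (h2 _))).mul hexp)
    have h0 : Lam α β γ ω 0 = 0 := by
      unfold Lam
      rw [Real.sin_zero, Real.zero_rpow hpa.ne']
      push_cast
      ring
    have := hc.tendsto.mono_left (nhdsWithin_le_nhds (s := Set.Ioi 0))
    rwa [h0] at this
  · intro hz
    have hq : β / α = γ := by field_simp; nlinarith
    have hc : ContinuousAt (Lam α β γ ω) 0 := by
      unfold Lam
      simp only [hq, sub_self, Real.rpow_zero, mul_one]
      exact ((Complex.continuous_ofReal.continuousAt.comp
        (continuousAt_const.mul (h2 (-γ)))).mul hexp)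
    have h0 : Lam α β γ ω 0 = ((|ω| ^ γ : ℝ) : ℂ) := by
      unfold Lam
      simp only [hq, sub_self, Real.rpow_zero, mul_one, sub_zero, hz, Real.sin_zero]
      rw [mul_assoc, ← Real.rpow_add hsin, add_neg_cancel, Real.rpow_zero, mul_one]
      norm_num
    have := hc.tendsto.mono_left (nhdsWithin_le_nhds (s := Set.Ioi 0))
    rwa [h0] at this
end

section
/- Let ω < 0, 0 < α ≤ 1 and 0 < αγ ≤ β ≤ 1. The map θ ↦ Λ(θ) is injective on (0, απ/2); that is, the curve Ψ = {Λ(θ) : θ ∈ (0, απ/2)} is a simple curve. -/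
open Real Complex Filter Set Topology

/-! Since `0 ≤ β - αγ` and `β ≤ 1`, the phase `φ(θ) = γθ + (β - αγ)π/2` of Λ(θ) lies in
`(0, π/2)` for `θ ∈ (0, απ/2)`, so it is the principal argument of Λ(θ); and `φ` is strictly
increasing because `γ > 0`. -/

theorem Complex.arg_ofReal_mul_exp_mul_I {r φ : ℝ} (hr : 0 < r) (hφ : φ ∈ Ioc (-π) π) :
    arg (r * exp (I * φ)) = φ := by
  rw [arg_real_mul _ hr, arg_exp, I_mul_im, ofReal_re, toIocMod_eq_self]
  rwa [neg_add_eq_sub, two_mul, add_sub_cancel_right]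

section

variable {α β γ ω θ : ℝ}

lemma lam_modulus_pos (hω : ω < 0) (hα0 : 0 < α) (hα1 : α ≤ 1) (hθ : θ ∈ Ioo 0 (α * π / 2)) :
    0 < |ω| ^ (β / α) * Real.sin θ ^ (β / α - γ) * Real.sin (α * π / 2) ^ γ *
      Real.sin (α * π / 2 - θ) ^ (-(β / α)) := by
  obtain ⟨hθ0, hθ1⟩ := hθ
  have hαπ : α * π / 2 < π := by nlinarith [pi_pos]
  have hsinθ : 0 < Real.sin θ := sin_pos_of_pos_of_lt_pi hθ0 (by linarith)
  have hsinαπ : 0 < Real.sin (α * π / 2) := sin_pos_of_pos_of_lt_pi (by linarith) hαπ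
  have hsin_sub : 0 < Real.sin (α * π / 2 - θ) :=
    sin_pos_of_pos_of_lt_pi (by linarith) (by linarith)
  have hω' : 0 < |ω| := abs_pos.mpr hω.ne
  positivity

lemma arg_lam (hω : ω < 0) (hα0 : 0 < α) (hα1 : α ≤ 1) (hγ : 0 < γ) (hβ0 : α * γ ≤ β)
    (hβ1 : β ≤ 1) (hθ : θ ∈ Ioo 0 (α * π / 2)) :
    arg (Lam α β γ ω θ) = γ * θ + (β - α * γ) * π / 2 := by
  refine arg_ofReal_mul_exp_mul_I (lam_modulus_pos hω hα0 hα1 hθ) ⟨?_, ?_⟩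
  · nlinarith [pi_pos, hθ.1]
  · nlinarith [pi_pos, hθ.2]

end

theorem lam_injOn (α β γ ω : ℝ) (hω : ω < 0) (hα0 : 0 < α) (hα1 : α ≤ 1)
    (hαγ : 0 < α * γ) (hβ0 : α * γ ≤ β) (hβ1 : β ≤ 1) :
    Set.InjOn (Lam α β γ ω) (Set.Ioo 0 (α * π / 2)) := by
  have hγ : 0 < γ := pos_of_mul_pos_right hαγ hα0.le
  intro x hx y hy hxy
  have hphase := congrArg arg hxy
  rw [arg_lam hω hα0 hα1 hγ hβ0 hβ1 hx, arg_lam hω hα0 hα1 hγ hβ0 hβ1 hy] at hphase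
  exact mul_left_cancel₀ hγ.ne' (add_right_cancel hphase)
end

section
/- Let ω < 0 and 0 < α ≤ 1. For every θ ∈ (0, απ/2), setting μ(θ) = (|ω| sin θ / sin(απ/2 − θ))^(1/α) and ρ(θ) = |ω| sin(απ/2)/sin(απ/2 − θ), one has the identity (i·μ(θ))^α − ω = ρ(θ)·exp(iθ), where (i·μ(θ))^α is the principal-branch complex power. -/
open Real Complex Filter Set Topology

/-! On the imaginary axis the principal power is explicit: `(iμ)^α = μ^α e^{iαπ/2}`. Since
`μ^α = |ω| sin θ / sin (A - θ)` with `A = απ/2`, clearing the denominator reduces the claim to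
`sin θ · e^{iA} + sin (A - θ) = sin A · e^{iθ}`, which is the subtraction formula for sine. -/

namespace Complex

theorem I_mul_ofReal_cpow {m : ℝ} (hm : 0 < m) (w : ℂ) :
    (I * m) ^ w = (m : ℂ) ^ w * exp (w * π / 2 * I) := by
  have hm' : (m : ℂ) ≠ 0 := ofReal_ne_zero.mpr hm.ne'
  rw [mul_comm I, cpow_def_of_ne_zero (mul_ne_zero hm' I_ne_zero), log_ofReal_mul hm I_ne_zero,
    log_I, cpow_def_of_ne_zero hm', ofReal_log hm.le, ← exp_add]
  ring_nf

theorem sin_mul_exp_mul_I_add_sin_sub (A θ : ℂ) :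
    sin θ * exp (A * I) + sin (A - θ) = sin A * exp (θ * I) := by
  rw [exp_mul_I, exp_mul_I, sin_sub]
  ring

theorem div_sin_sub_mul_exp_mul_I_add {A θ : ℂ} (h : sin (A - θ) ≠ 0) (c : ℂ) :
    c * sin θ / sin (A - θ) * exp (A * I) + c = c * sin A / sin (A - θ) * exp (θ * I) := by
  field_simp
  linear_combination c * sin_mul_exp_mul_I_add_sin_sub A θ

end Complex

theorem imaginary_power_identity (α ω : ℝ) (hω : ω < 0) (hα0 : 0 < α) (hα1 : α ≤ 1) :
    ∀ θ ∈ Set.Ioo 0 (α * π / 2),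
      (Complex.I * (muP α ω θ : ℂ)) ^ ((α : ℝ) : ℂ) - (ω : ℂ) =
        (rhoP α ω θ : ℂ) * Complex.exp (Complex.I * (θ : ℂ)) := by
  rintro θ ⟨hθ0, hθA⟩
  have hA : α * π / 2 ≤ π / 2 := by nlinarith [pi_pos]
  have hsin_sub : 0 < Real.sin (α * π / 2 - θ) :=
    Real.sin_pos_of_pos_of_lt_pi (by linarith) (by linarith [pi_pos])
  have hK : 0 < |ω| * Real.sin θ / Real.sin (α * π / 2 - θ) :=
    div_pos (mul_pos (abs_pos.mpr hω.ne) (Real.sin_pos_of_pos_of_lt_pi hθ0 (by linarith [pi_pos])))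
      hsin_sub
  have hμ_rpow : muP α ω θ ^ α = |ω| * Real.sin θ / Real.sin (α * π / 2 - θ) := by
    rw [muP, ← Real.rpow_mul hK.le, one_div_mul_cancel hα0.ne', Real.rpow_one]
  have hsin_sub' : Complex.sin (↑(α * π / 2) - θ) ≠ 0 := by exact_mod_cast hsin_sub.ne'
  have hμ : 0 < muP α ω θ := Real.rpow_pos_of_pos hK _
  have hω_abs : (ω : ℂ) = -((|ω| : ℝ) : ℂ) := by rw [abs_of_neg hω, Complex.ofReal_neg, neg_neg]
  rw [Complex.I_mul_ofReal_cpow hμ, ← Complex.ofReal_cpow hμ.le, hμ_rpow, rhoP, hω_abs,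
    sub_neg_eq_add, mul_comm Complex.I]
  have h_trig := Complex.div_sin_sub_mul_exp_mul_I_add hsin_sub' ((|ω| : ℝ) : ℂ)
  push_cast at h_trig ⊢
  exact h_trig
end

section
/- Let ω < 0, 0 < α ≤ 1 and 0 < αγ ≤ β ≤ 1, and let λ ∈ ℂ. If s ∈ ℂ satisfies Re(s) ≥ 0 and F(s) = λ, then |s| ≤ |λ|^(1/β). -/
open Real Complex Filter Set Topology

/-!
A point `s` of the closed right half-plane has `|arg s| ≤ π/2`, so for `0 ≤ α ≤ 1` the power `s^α`
stays in that half-plane, where subtracting `ω ≤ 0` can only increase the modulus. Hence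
`|F(s)| = |s|^(β-αγ) |s^α - ω|^γ ≥ |s|^(β-αγ) |s|^(αγ) = |s|^β`; take `β`-th roots.
-/

theorem Complex.re_cpow_ofReal_nonneg {s : ℂ} (hs : 0 ≤ s.re) {a : ℝ} (ha0 : 0 ≤ a)
    (ha1 : a ≤ 1) : 0 ≤ (s ^ (a : ℂ)).re := by
  rw [cpow_ofReal_re]
  refine mul_nonneg (rpow_nonneg (norm_nonneg s) a) (Real.cos_nonneg_of_mem_Icc ?_)
  have harg : |arg s * a| ≤ π / 2 := by
    rw [abs_mul, abs_of_nonneg ha0]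
    exact (mul_le_of_le_one_right (abs_nonneg _) ha1).trans (abs_arg_le_pi_div_two_iff.2 hs)
  exact abs_le.1 harg

theorem Complex.norm_le_norm_sub_ofReal {z : ℂ} (hz : 0 ≤ z.re) {ω : ℝ} (hω : ω ≤ 0) :
    ‖z‖ ≤ ‖z - ω‖ := by
  have hsq : ‖z‖ ^ 2 ≤ ‖z - ω‖ ^ 2 := by
    rw [Complex.sq_norm, Complex.sq_norm, normSq_apply, normSq_apply, sub_re, sub_im, ofReal_re,
      ofReal_im]
    nlinarith
  exact (pow_le_pow_iff_left₀ (norm_nonneg _) (norm_nonneg _) two_ne_zero).1 hsq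

theorem norm_Fc (α β γ ω : ℝ) (s : ℂ) :
    ‖Fc α β γ ω s‖ = ‖s‖ ^ (β - α * γ) * ‖s ^ (α : ℂ) - ω‖ ^ γ := by
  rw [Fc, norm_mul, norm_cpow_real, norm_cpow_real]

theorem rpow_norm_le_norm_Fc {α β γ ω : ℝ} (hω : ω ≤ 0) (hα0 : 0 ≤ α) (hα1 : α ≤ 1)
    (hγ : 0 ≤ γ) (hβ : 0 < β) {s : ℂ} (hs : 0 ≤ s.re) :
    ‖s‖ ^ β ≤ ‖Fc α β γ ω s‖ := by
  have hpow : ‖s‖ ^ α ≤ ‖s ^ (α : ℂ) - ω‖ := by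
    rw [← norm_cpow_real]
    exact norm_le_norm_sub_ofReal (re_cpow_ofReal_nonneg hs hα0 hα1) hω
  calc ‖s‖ ^ β = ‖s‖ ^ (β - α * γ) * (‖s‖ ^ α) ^ γ := by
        rw [← rpow_mul (norm_nonneg s), ← rpow_add' (norm_nonneg s) (by linarith), sub_add_cancel]
    _ ≤ ‖s‖ ^ (β - α * γ) * ‖s ^ (α : ℂ) - ω‖ ^ γ := by gcongr
    _ = ‖Fc α β γ ω s‖ := (norm_Fc α β γ ω s).symm

theorem unstable_roots_bounded_general (α β γ ω : ℝ) (hω : ω < 0) (hα0 : 0 < α) (hα1 : α ≤ 1)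
    (hαγ : 0 < α * γ) (hβ0 : α * γ ≤ β) (lam : ℂ) :
    ∀ s : ℂ, 0 ≤ s.re → Fc α β γ ω s = lam →
      ‖s‖ ≤ ‖lam‖ ^ (1 / β) := by
  intro s hs hF
  have hβ : 0 < β := hαγ.trans_le hβ0
  have hγ : 0 ≤ γ := (pos_of_mul_pos_right hαγ hα0.le).le
  rw [one_div, le_rpow_inv_iff_of_pos (norm_nonneg s) (norm_nonneg lam) hβ, ← hF]
  exact rpow_norm_le_norm_Fc hω.le hα0.le hα1 hγ hβ hs

theorem unstable_roots_bounded (α β γ ω : ℝ) (hω : ω < 0) (hα0 : 0 < α) (hα1 : α ≤ 1)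
    (hαγ : 0 < α * γ) (hβ0 : α * γ ≤ β) (hβ1 : β ≤ 1) (lam : ℂ) :
    ∀ s : ℂ, 0 ≤ s.re → Fc α β γ ω s = lam →
      ‖s‖ ≤ ‖lam‖ ^ (1 / β) :=
  unstable_roots_bounded_general α β γ ω hω hα0 hα1 hαγ hβ0 lam
end

section
/- Let ω < 0, 0 < α ≤ 1 and 0 < αγ ≤ β ≤ 1. For every λ ∈ ℂ, the set {s ∈ ℂ : Re(s) ≥ 0 and F(s) = λ} of unstable roots of the characteristic equation is finite. -/
open Real Complex Filter Set Topology

/-!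
A solution of `F s = λ` lies in the compact set `{|s| ≤ |λ|^(1/β), Re s ≥ 0}`: on the closed
right half-plane `Re (s^α) ≥ 0`, so `|s^α - ω| ≥ |s|^α` and `|F s| ≥ |s|^β`. An infinite set of solutions
would therefore accumulate at some point `x` of that set. If `x ≠ 0`, then `x` lies in the slit
plane, where `F` is analytic, and the identity theorem would make `F ≡ λ` there, contradicting the
growth `|F s| ≥ |s|^β`. At `x = 0` the two cases of `β ≥ αγ` behave differently. If `β = αγ`,
then `F s = g (s^α)` with `g z = (z - ω)^γ`, whose derivative `γ (-ω)^(γ-1)` at `0` does not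
vanish, so the solutions of `g z = λ` cannot accumulate at `0`. If `β > αγ`, then `F s → 0` as
`s → 0`, while `F` has no zeros in the closed right half-plane other than `0`.
-/

theorem IsCompact.finite_of_forall_eventually_notMem {X : Type*} [TopologicalSpace X]
    {K S : Set X} (hK : IsCompact K) (hSK : S ⊆ K) (h : ∀ x ∈ K, ∀ᶠ y in 𝓝[≠] x, y ∉ S) :
    S.Finite := by
  by_contra hS
  obtain ⟨x, hx, hacc⟩ := Set.Infinite.exists_accPt_of_subset_isCompact hS hK hSK
  exact hacc.ne (inf_principal_eq_bot.2 (h x hx))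

namespace Complex

lemma mem_slitPlane_of_re_nonneg {s : ℂ} (hs : 0 ≤ s.re) (hs0 : s ≠ 0) : s ∈ slitPlane := by
  rcases hs.lt_or_eq with hre | hre
  · exact Or.inl hre
  · exact Or.inr fun him => hs0 (Complex.ext hre.symm him)

lemma sub_ofReal_mem_slitPlane {z : ℂ} {r : ℝ} (hz : z ∈ slitPlane) (hr : r ≤ 0) :
    z - r ∈ slitPlane := by
  rcases mem_slitPlane_iff.1 hz with hre | him
  · exact Or.inl (by simp; linarith)
  · exact Or.inr (by simpa using him)

lemma re_cpow_ofReal_nonneg_s9 {s : ℂ} {α : ℝ} (hs : 0 ≤ s.re) (hα0 : 0 ≤ α) (hα1 : α ≤ 1) :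
    0 ≤ (s ^ (α : ℂ)).re := by
  rw [cpow_ofReal_re]
  have harg := abs_le.1 (abs_arg_le_pi_div_two_iff.2 hs)
  refine mul_nonneg (Real.rpow_nonneg (norm_nonneg s) _) (Real.cos_nonneg_of_mem_Icc ⟨?_, ?_⟩)
  all_goals nlinarith [Real.pi_pos]

lemma cpow_ofReal_mem_slitPlane {s : ℂ} {α : ℝ} (hs : s ∈ slitPlane) (hα0 : 0 ≤ α)
    (hα1 : α ≤ 1) : s ^ (α : ℂ) ∈ slitPlane := by
  have harg_lt : arg s < π := (arg_le_pi s).lt_of_ne (slitPlane_arg_ne_pi hs)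
  have hθ : -π < arg s * α ∧ arg s * α < π := by
    constructor <;> nlinarith [neg_pi_lt_arg s, Real.pi_pos]
  have hpos : 0 < ‖s‖ ^ α := Real.rpow_pos_of_pos (norm_pos_iff.2 (slitPlane_ne_zero hs)) _
  rw [mem_slitPlane_iff, cpow_ofReal_re, cpow_ofReal_im]
  rcases eq_or_ne (arg s * α) 0 with h | h
  · exact Or.inl (by simpa [h] using hpos)
  · exact Or.inr (mul_ne_zero hpos.ne' (mt (Real.sin_eq_zero_iff_of_lt_of_lt hθ.1 hθ.2).1 h))

lemma norm_le_norm_sub_ofReal_s9 {z : ℂ} {r : ℝ} (hz : 0 ≤ z.re) (hr : r ≤ 0) : ‖z‖ ≤ ‖z - r‖ := by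
  rw [norm_def, norm_def]
  refine Real.sqrt_le_sqrt ?_
  simp only [normSq_apply, sub_re, sub_im, ofReal_re, ofReal_im, sub_zero]
  nlinarith

lemma isPreconnected_slitPlane : IsPreconnected slitPlane :=
  (starConvex_one_slitPlane.isPathConnected one_mem_slitPlane).isConnected.isPreconnected

end Complex

section CharacteristicFunction

variable {α β γ ω : ℝ}

lemma analyticOnNhd_Fc (hω : ω ≤ 0) (hα0 : 0 ≤ α) (hα1 : α ≤ 1) :
    AnalyticOnNhd ℂ (Fc α β γ ω) slitPlane := by
  have hpow (c : ℂ) : AnalyticOnNhd ℂ (fun s : ℂ => s ^ c) slitPlane :=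
    analyticOnNhd_id.cpow analyticOnNhd_const fun _ hs => hs
  exact (hpow _).mul (((hpow _).sub analyticOnNhd_const).cpow analyticOnNhd_const
    fun s hs => sub_ofReal_mem_slitPlane (cpow_ofReal_mem_slitPlane hs hα0 hα1) hω)

lemma Fc_ne_zero (hω : ω ≤ 0) (hα0 : 0 ≤ α) (hα1 : α ≤ 1) {s : ℂ} (hs : s ∈ slitPlane) :
    Fc α β γ ω s ≠ 0 := by
  have hcpow {z : ℂ} (hz : z ≠ 0) (c : ℂ) : z ^ c ≠ 0 := fun h => hz ((cpow_eq_zero_iff z c).1 h).1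
  exact mul_ne_zero (hcpow (slitPlane_ne_zero hs) _) (hcpow (slitPlane_ne_zero
    (sub_ofReal_mem_slitPlane (cpow_ofReal_mem_slitPlane hs hα0 hα1) hω)) _)

lemma norm_rpow_le_norm_Fc (hω : ω ≤ 0) (hα0 : 0 ≤ α) (hα1 : α ≤ 1) (hγ : 0 ≤ γ) {s : ℂ}
    (hs : 0 ≤ s.re) (hs0 : s ≠ 0) : ‖s‖ ^ β ≤ ‖Fc α β γ ω s‖ := by
  have hnorm := norm_le_norm_sub_ofReal_s9 (re_cpow_ofReal_nonneg_s9 hs hα0 hα1) hω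
  rw [norm_cpow_real] at hnorm
  rw [Fc, norm_mul, norm_cpow_real, norm_cpow_real]
  calc ‖s‖ ^ β = ‖s‖ ^ (β - α * γ) * (‖s‖ ^ α) ^ γ := by
        rw [← Real.rpow_mul (norm_nonneg s), ← Real.rpow_add (norm_pos_iff.2 hs0)]; ring_nf
    _ ≤ ‖s‖ ^ (β - α * γ) * ‖s ^ (α : ℂ) - ω‖ ^ γ := by gcongr

lemma norm_le_of_Fc_eq (hω : ω ≤ 0) (hα0 : 0 ≤ α) (hα1 : α ≤ 1) (hγ : 0 ≤ γ) (hβ : 0 < β)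
    {s lam : ℂ} (hs : 0 ≤ s.re) (h : Fc α β γ ω s = lam) : ‖s‖ ≤ ‖lam‖ ^ β⁻¹ := by
  rcases eq_or_ne s 0 with rfl | hs0
  · simpa using Real.rpow_nonneg (norm_nonneg lam) _
  rw [Real.le_rpow_inv_iff_of_pos (norm_nonneg s) (norm_nonneg lam) hβ, ← h]
  exact norm_rpow_le_norm_Fc hω hα0 hα1 hγ hs hs0

lemma eventually_Fc_ne_nhdsNE_of_mem_slitPlane (hω : ω ≤ 0) (hα0 : 0 ≤ α) (hα1 : α ≤ 1) (hγ : 0 ≤ γ)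
    (hβ : 0 < β) {x : ℂ} (hx : x ∈ slitPlane) (lam : ℂ) :
    ∀ᶠ s in 𝓝[≠] x, Fc α β γ ω s ≠ lam := by
  have hF := analyticOnNhd_Fc (β := β) (γ := γ) hω hα0 hα1
  refine ((hF x hx).eventually_eq_or_eventually_ne analyticAt_const).resolve_left fun hev => ?_
  set t : ℝ := ‖lam‖ ^ β⁻¹ + 1
  have ht : 0 < t := by positivity
  have hFt : Fc α β γ ω t = lam :=
    hF.eqOn_of_preconnected_of_eventuallyEq analyticOnNhd_const isPreconnected_slitPlane hx hev
      (ofReal_mem_slitPlane.2 ht)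
  have := norm_le_of_Fc_eq hω hα0 hα1 hγ hβ (by simpa using ht.le) hFt
  rw [norm_real, Real.norm_of_nonneg ht.le] at this
  linarith

lemma eventually_Fc_ne_nhdsNE_zero_of_eq (hω : ω < 0) (hα0 : 0 < α) (hγ : γ ≠ 0)
    (hβ : β = α * γ) (lam : ℂ) : ∀ᶠ s in 𝓝[≠] 0, Fc α β γ ω s ≠ lam := by
  have hFc (s : ℂ) : Fc α β γ ω s = (s ^ (α : ℂ) - ω) ^ (γ : ℂ) := by simp [Fc, hβ]
  have hω' : (0 : ℂ) - ω ∈ slitPlane := by simpa using hω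
  have hg : HasDerivAt (fun z : ℂ => (z - ω) ^ (γ : ℂ)) ((γ : ℂ) * (0 - ω) ^ ((γ : ℂ) - 1) * 1) 0 :=
    ((hasDerivAt_id (0 : ℂ)).sub_const _).cpow_const hω'
  have hg' : (γ : ℂ) * (0 - ω) ^ ((γ : ℂ) - 1) * 1 ≠ 0 := by
    simp [hγ, cpow_eq_zero_iff, hω.ne]
  have hpow : Tendsto (fun s : ℂ => s ^ (α : ℂ)) (𝓝[≠] 0) (𝓝[≠] 0) := by
    refine tendsto_nhdsWithin_of_tendsto_nhds_of_eventually_within _ ?_ ?_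
    · have := (continuousAt_cpow_const_of_re_pos (z := 0) (w := α) (by simp)
        (by simpa using hα0)).tendsto
      simpa [zero_cpow (ofReal_ne_zero.2 hα0.ne')] using this.mono_left nhdsWithin_le_nhds
    · filter_upwards [self_mem_nhdsWithin] with s hs
      simpa [cpow_eq_zero_iff, hα0.ne'] using hs
  simpa only [hFc] using hpow.eventually (hg.eventually_ne hg')

lemma tendsto_Fc_zero (hω : ω < 0) (hα0 : 0 < α) (hβ : α * γ < β) :
    Tendsto (Fc α β γ ω) (𝓝 0) (𝓝 0) := by
  have hpow {c : ℝ} (hc : 0 < c) : Tendsto (fun s : ℂ => s ^ (c : ℂ)) (𝓝 0) (𝓝 0) := by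
    simpa [zero_cpow (ofReal_ne_zero.2 hc.ne')] using
      (continuousAt_cpow_const_of_re_pos (z := 0) (w := c) (by simp) (by simpa using hc)).tendsto
  have hrest : Tendsto (fun s : ℂ => (s ^ (α : ℂ) - ω) ^ (γ : ℂ)) (𝓝 0) (𝓝 ((0 - ω) ^ (γ : ℂ))) :=
    (continuousAt_cpow_const (by simpa using hω)).tendsto.comp ((hpow hα0).sub_const _)
  have := (hpow (sub_pos.2 hβ)).mul hrest
  rwa [zero_mul] at this

lemma eventually_Fc_ne_nhdsNE_zero_of_lt (hω : ω < 0) (hα0 : 0 < α) (hα1 : α ≤ 1)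
    (hβ : α * γ < β) (lam : ℂ) : ∀ᶠ s in 𝓝[≠] 0, 0 ≤ s.re → Fc α β γ ω s ≠ lam := by
  rcases eq_or_ne lam 0 with rfl | hlam
  · filter_upwards [self_mem_nhdsWithin] with s hs hre
    exact Fc_ne_zero hω.le hα0.le hα1 (mem_slitPlane_of_re_nonneg hre hs)
  · exact ((tendsto_Fc_zero hω hα0 hβ).eventually_ne hlam.symm).filter_mono nhdsWithin_le_nhds
      |>.mono fun _ h _ => h

end CharacteristicFunction

theorem unstable_roots_finite_general (α β γ ω : ℝ) (hω : ω < 0) (hα0 : 0 < α) (hα1 : α ≤ 1)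
    (hαγ : 0 < α * γ) (hβ0 : α * γ ≤ β) (lam : ℂ) :
    {s : ℂ | 0 ≤ s.re ∧ Fc α β γ ω s = lam}.Finite := by
  have hγ : 0 < γ := pos_of_mul_pos_right hαγ hα0.le
  have hβ : 0 < β := hαγ.trans_le hβ0
  have hK : IsCompact (Metric.closedBall 0 (‖lam‖ ^ β⁻¹) ∩ {s : ℂ | 0 ≤ s.re}) :=
    (isCompact_closedBall _ _).inter_right (isClosed_le continuous_const continuous_re)
  refine hK.finite_of_forall_eventually_notMem (fun s hs => ⟨mem_closedBall_zero_iff.2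
    (norm_le_of_Fc_eq hω.le hα0.le hα1 hγ.le hβ hs.1 hs.2), hs.1⟩) ?_
  rintro x ⟨-, hx⟩
  rcases eq_or_ne x 0 with rfl | hx0
  · rcases hβ0.eq_or_lt with hβ0 | hβ0
    · filter_upwards [eventually_Fc_ne_nhdsNE_zero_of_eq hω hα0 hγ.ne' hβ0.symm lam]
        with s hs using fun h => hs h.2
    · filter_upwards [eventually_Fc_ne_nhdsNE_zero_of_lt hω hα0 hα1 hβ0 lam]
        with s hs using fun h => hs h.1 h.2
  · filter_upwards [eventually_Fc_ne_nhdsNE_of_mem_slitPlane hω.le hα0.le hα1 hγ.le hβ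
      (mem_slitPlane_of_re_nonneg hx hx0) lam] with s hs using fun h => hs h.2

theorem unstable_roots_finite (α β γ ω : ℝ) (hω : ω < 0) (hα0 : 0 < α) (hα1 : α ≤ 1)
    (hαγ : 0 < α * γ) (hβ0 : α * γ ≤ β) (hβ1 : β ≤ 1) (lam : ℂ) :
    {s : ℂ | 0 ≤ s.re ∧ Fc α β γ ω s = lam}.Finite :=
  unstable_roots_finite_general α β γ ω hω hα0 hα1 hαγ hβ0 lam
end

section
/- Let ω < 0 and 0 < α ≤ 1. For every s ∈ ℂ with Arg(s) ∈ (0, π/2], one has 0 < Arg(s^α − ω) < Arg(s^α) = α·Arg(s), where s^α denotes the principal-branch complex power. -/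
open Real Complex Filter Set Topology

/-!
In the upper half-plane `arg z = π/2 - arctan (re z / im z)`, so adding a positive real number
to `z` strictly decreases its argument while keeping it positive. Since `0 < α * arg s ≤ π/2`,
the power `s ^ α` lies in the upper half-plane with argument `α * arg s`, and `s ^ α - ω` is
obtained from it by adding `-ω > 0`.
-/

namespace Complex

lemma arg_pos_of_im_pos {z : ℂ} (hz : 0 < z.im) : 0 < arg z :=
  (arg_nonneg_iff.2 hz.le).lt_of_ne fun h ↦ hz.ne' (arg_eq_zero_iff.1 h.symm).2

lemma arg_eq_pi_div_two_sub_arctan {z : ℂ} (hz : 0 < z.im) :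
    arg z = π / 2 - Real.arctan (z.re / z.im) := by
  have hlt : arg z < π := arg_lt_pi_iff.2 (Or.inr hz.ne')
  have hpos := arg_pos_of_im_pos hz
  -- `tan (arg z) = im z / re z`, including the junk value `0` when `re z = 0`.
  have htan : Real.tan (π / 2 - arg z) = z.re / z.im := by
    rw [Real.tan_pi_div_two_sub, tan_arg, inv_div]
  rw [← htan, Real.arctan_tan (by linarith) (by linarith)]
  ring

lemma arg_add_ofReal_lt {z : ℂ} (hz : 0 < z.im) {c : ℝ} (hc : 0 < c) : arg (z + c) < arg z := by
  have hz' : 0 < (z + c).im := by simpa using hz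
  rw [arg_eq_pi_div_two_sub_arctan hz, arg_eq_pi_div_two_sub_arctan hz', add_im, ofReal_im,
    add_zero, add_re, ofReal_re, sub_lt_sub_iff_left]
  exact Real.arctan_strictMono (div_lt_div_of_pos_right (by linarith) hz)

lemma arg_cpow_ofReal {x : ℂ} (hx : x ≠ 0) {y : ℝ} (h : arg x * y ∈ Ioc (-π) π) :
    arg (x ^ (y : ℂ)) = arg x * y := by
  rw [cpow_ofReal, ofReal_cos, ofReal_sin]
  exact arg_mul_cos_add_sin_mul_I (Real.rpow_pos_of_pos (norm_pos_iff.2 hx) y) h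

end Complex

theorem arg_cpow_sub_omega (α ω : ℝ) (hω : ω < 0) (hα0 : 0 < α) (hα1 : α ≤ 1) :
    ∀ s : ℂ, 0 < s.arg → s.arg ≤ π / 2 →
      0 < (s ^ ((α : ℝ) : ℂ) - (ω : ℂ)).arg ∧
      (s ^ ((α : ℝ) : ℂ) - (ω : ℂ)).arg < (s ^ ((α : ℝ) : ℂ)).arg ∧
      (s ^ ((α : ℝ) : ℂ)).arg = α * s.arg := by
  intro s hs0 hs1
  have hs : s ≠ 0 := by rintro rfl; simp at hs0
  have hθ0 : 0 < s.arg * α := mul_pos hs0 hα0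
  have hθ1 : s.arg * α ≤ π / 2 := by nlinarith
  have him : 0 < (s ^ ((α : ℝ) : ℂ)).im := by
    rw [cpow_ofReal_im]
    exact mul_pos (Real.rpow_pos_of_pos (norm_pos_iff.2 hs) α)
      (Real.sin_pos_of_pos_of_lt_pi hθ0 (by linarith [Real.pi_pos]))
  have hsub : s ^ ((α : ℝ) : ℂ) - (ω : ℂ) = s ^ ((α : ℝ) : ℂ) + ((-ω : ℝ) : ℂ) := by
    push_cast; ring
  refine ⟨arg_pos_of_im_pos (by simpa using him), ?_, ?_⟩
  · rw [hsub]
    exact arg_add_ofReal_lt him (neg_pos.2 hω)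
  · rw [arg_cpow_ofReal hs ⟨by linarith, by linarith⟩, mul_comm]
end

section
/- Let ω < 0, 0 < α ≤ 1 and 0 < αγ ≤ β ≤ 1, and let λ be a negative real number, λ < 0. Then the characteristic equation F(s) = λ has no root s with Re(s) ≥ 0; all its roots lie in the open left half-plane. -/
open Real Complex Filter Set Topology

namespace Complex

theorem abs_arg_le_iff_norm_mul_cos_le_re {z : ℂ} {φ : ℝ} (hφ₀ : 0 ≤ φ) (hφπ : φ ≤ π) :
    |arg z| ≤ φ ↔ ‖z‖ * Real.cos φ ≤ z.re := by
  rcases eq_or_ne z 0 with rfl | hz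
  · simpa using hφ₀
  rw [← norm_mul_cos_arg, ← Real.cos_abs (arg z), mul_le_mul_iff_right₀ (norm_pos_iff.mpr hz)]
  exact (Real.strictAntiOn_cos.le_iff_ge ⟨hφ₀, hφπ⟩ ⟨abs_nonneg _, abs_arg_le_pi z⟩).symm

theorem abs_arg_cpow_ofReal_le {z : ℂ} {r : ℝ} (hr : 0 ≤ r) (hπ : r * |arg z| ≤ π) :
    |arg (z ^ (r : ℂ))| ≤ r * |arg z| := by
  rw [abs_arg_le_iff_norm_mul_cos_le_re (by positivity) hπ, norm_cpow_real, cpow_ofReal_re,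
    ← Real.cos_abs (arg z * r), abs_mul, abs_of_nonneg hr, mul_comm |arg z|]

theorem abs_arg_add_ofReal_le {u : ℂ} {c φ : ℝ} (hc : 0 ≤ c) (hφ₀ : 0 ≤ φ) (hφ : φ ≤ π / 2)
    (hu : |arg u| ≤ φ) : |arg (u + c)| ≤ φ := by
  have hφπ : φ ≤ π := hφ.trans (by linarith [pi_pos])
  rw [abs_arg_le_iff_norm_mul_cos_le_re hφ₀ hφπ] at hu ⊢
  have hcos₀ : 0 ≤ Real.cos φ := Real.cos_nonneg_of_mem_Icc ⟨by linarith, hφ⟩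
  calc ‖u + c‖ * Real.cos φ ≤ (‖u‖ + c) * Real.cos φ := by
        gcongr
        simpa [abs_of_nonneg hc] using norm_add_le u (c : ℂ)
    _ ≤ u.re + c := by nlinarith [Real.cos_le_one φ]
    _ = (u + c).re := by simp

theorem re_cpow_ofReal_mul_cpow_ofReal (z w : ℂ) (a b : ℝ) :
    (z ^ (a : ℂ) * w ^ (b : ℂ)).re = ‖z‖ ^ a * ‖w‖ ^ b * Real.cos (arg z * a + arg w * b) := by
  rw [mul_re, cpow_ofReal_re, cpow_ofReal_re, cpow_ofReal_im, cpow_ofReal_im, Real.cos_add]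
  ring

end Complex

/-- For `Re s ≥ 0` the argument of `s ^ α - ω` stays within `απ/2`, so the argument of `F s`
stays within `(β - αγ)π/2 + γ·απ/2 = βπ/2 ≤ π/2`. -/
theorem re_Fc_nonneg {α β γ ω : ℝ} (hω : ω ≤ 0) (hα₀ : 0 ≤ α) (hα₁ : α ≤ 1) (hγ : 0 ≤ γ)
    (hβ₀ : α * γ ≤ β) (hβ₁ : β ≤ 1) {s : ℂ} (hs : 0 ≤ s.re) : 0 ≤ (Fc α β γ ω s).re := by
  have hπ := pi_pos
  have harg_s : |arg s| ≤ π / 2 := abs_arg_le_pi_div_two_iff.mpr hs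
  have harg_pow : |arg (s ^ (α : ℂ))| ≤ α * (π / 2) :=
    (abs_arg_cpow_ofReal_le hα₀ (by nlinarith)).trans (by gcongr)
  set w := s ^ (α : ℂ) - ω
  have harg_w : |arg w| ≤ α * (π / 2) := by
    have hw : w = s ^ (α : ℂ) + ((-ω : ℝ) : ℂ) := by push_cast; ring
    exact hw ▸ abs_arg_add_ofReal_le (by linarith) (by positivity) (by nlinarith) harg_pow
  have harg_F : |arg s * (β - α * γ) + arg w * γ| ≤ π / 2 := by
    calc |arg s * (β - α * γ) + arg w * γ|
        ≤ |arg s| * (β - α * γ) + |arg w| * γ := by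
          grw [abs_add_le, abs_mul, abs_mul, abs_of_nonneg (sub_nonneg.mpr hβ₀), abs_of_nonneg hγ]
      _ ≤ π / 2 * (β - α * γ) + α * (π / 2) * γ := by
          gcongr
      _ = β * (π / 2) := by ring
      _ ≤ π / 2 := by nlinarith
  rw [Fc, re_cpow_ofReal_mul_cpow_ofReal]
  have := Real.cos_nonneg_of_mem_Icc (abs_le.mp harg_F)
  positivity

theorem no_unstable_roots_for_negative_lambda (α β γ ω : ℝ) (hω : ω < 0) (hα0 : 0 < α)
    (hα1 : α ≤ 1) (hαγ : 0 < α * γ) (hβ0 : α * γ ≤ β) (hβ1 : β ≤ 1)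
    (lam : ℝ) (hlam : lam < 0) :
    ∀ s : ℂ, Fc α β γ ω s = (lam : ℂ) → s.re < 0 := by
  intro s hs
  by_contra! hre
  have hγ : 0 ≤ γ := (pos_of_mul_pos_right hαγ hα0.le).le
  have hF := re_Fc_nonneg hω.le hα0.le hα1 hγ hβ0 hβ1 hre
  rw [hs, ofReal_re] at hF
  linarith
end

section
/- Let ω < 0, 0 < α ≤ 1 and 0 < αγ ≤ β ≤ 1. For every θ ∈ (0, απ/2), the map Λ is differentiable at θ (as a function from ℝ to ℂ) with derivative Λ′(θ) = [sin(απ/2)/(α·sin θ·sin(απ/2 − θ))]·[β − αγ·(sin(απ/2 − θ)/sin(απ/2))·exp(−iθ)]·Λ(θ). -/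
open Real Complex Filter Set Topology

/-!
Write Λ = R · e^{iφ} with R(θ) = c · (sin θ)^{β/α-γ} · (sin(απ/2 - θ))^{-β/α} and
φ(θ) = γθ + const. Logarithmic derivatives add, so
Λ'/Λ = (β/α - γ) cot θ + (β/α) cot(απ/2 - θ) + iγ, and the identity
cot θ + cot(απ/2 - θ) = sin(απ/2) / (sin θ sin(απ/2 - θ)) together with
e^{-iθ} = cos θ - i sin θ turns this into the stated factor.
-/

theorem HasDerivAt.mul_of_logDeriv {𝕜 𝔸 : Type*} [NontriviallyNormedField 𝕜] [NormedCommRing 𝔸]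
    [NormedAlgebra 𝕜 𝔸] {f g : 𝕜 → 𝔸} {a b : 𝔸} {x : 𝕜}
    (hf : HasDerivAt f (a * f x) x) (hg : HasDerivAt g (b * g x) x) :
    HasDerivAt (fun y => f y * g y) ((a + b) * (f x * g x)) x :=
  (hf.mul hg).congr_deriv (by ring)

namespace Real

theorem hasDerivAt_sin_rpow {p t : ℝ} (ht : sin t ≠ 0) :
    HasDerivAt (fun s => sin s ^ p) (p * (cos t / sin t) * sin t ^ p) t := by
  refine ((hasDerivAt_sin t).rpow_const (Or.inl ht)).congr_deriv ?_
  rw [rpow_sub_one ht]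
  field_simp

theorem hasDerivAt_sin_const_sub_rpow {c p t : ℝ} (ht : sin (c - t) ≠ 0) :
    HasDerivAt (fun s => sin (c - s) ^ p) (-p * (cos (c - t) / sin (c - t)) * sin (c - t) ^ p) t := by
  have hsin : HasDerivAt (fun s => sin (c - s)) (-cos (c - t)) t := by
    simpa using ((hasDerivAt_id t).const_sub c).sin
  refine (hsin.rpow_const (Or.inl ht)).congr_deriv ?_
  rw [rpow_sub_one ht]
  field_simp

theorem cos_div_sin_add_cos_div_sin_sub {c t : ℝ} (ht : sin t ≠ 0) (hct : sin (c - t) ≠ 0) :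
    cos t / sin t + cos (c - t) / sin (c - t) = sin c / (sin t * sin (c - t)) := by
  have hc : sin c = sin (t + (c - t)) := by ring_nf
  rw [hc, sin_add]
  field_simp
  ring

end Real

theorem Complex.hasDerivAt_exp_I_mul_affine (γ δ t : ℝ) :
    HasDerivAt (fun s : ℝ => exp (I * ((γ * s + δ : ℝ) : ℂ)))
      (I * γ * exp (I * ((γ * t + δ : ℝ) : ℂ))) t := by
  have hφ : HasDerivAt (fun s : ℝ => γ * s + δ) γ t := by
    simpa using ((hasDerivAt_id t).const_mul γ).add_const δ
  exact (hφ.ofReal_comp.const_mul I).cexp.congr_deriv (by ring)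

theorem Complex.exp_neg_I_mul (z : ℂ) : exp (-(I * z)) = cos z - sin z * I := by
  rw [show -(I * z) = -z * I by ring, exp_mul_I, cos_neg, sin_neg]
  ring

theorem hasDerivAt_lam {α β γ ω θ : ℝ} (hθ : Real.sin θ ≠ 0) (hθ' : Real.sin (α * π / 2 - θ) ≠ 0) :
    HasDerivAt (Lam α β γ ω)
      ((((β / α * (Real.sin (α * π / 2) / (Real.sin θ * Real.sin (α * π / 2 - θ))) -
        γ * (Real.cos θ / Real.sin θ) : ℝ) : ℂ) + I * γ) * Lam α β γ ω θ) θ := by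
  have hR : HasDerivAt (fun t => |ω| ^ (β / α) * Real.sin t ^ (β / α - γ) *
      Real.sin (α * π / 2) ^ γ * Real.sin (α * π / 2 - t) ^ (-(β / α)))
      ((β / α * (Real.sin (α * π / 2) / (Real.sin θ * Real.sin (α * π / 2 - θ))) -
        γ * (Real.cos θ / Real.sin θ)) * (|ω| ^ (β / α) * Real.sin θ ^ (β / α - γ) *
        Real.sin (α * π / 2) ^ γ * Real.sin (α * π / 2 - θ) ^ (-(β / α)))) θ := by
    refine ((((Real.hasDerivAt_sin_rpow hθ).const_mul _).mul_const _).mul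
      (Real.hasDerivAt_sin_const_sub_rpow hθ')).congr_deriv ?_
    rw [← Real.cos_div_sin_add_cos_div_sin_sub hθ hθ']
    ring
  exact (hR.ofReal_comp.congr_deriv (ofReal_mul _ _)).mul_of_logDeriv
    (hasDerivAt_exp_I_mul_affine γ ((β - α * γ) * π / 2) θ)

theorem lam_hasDerivAt_general (α β γ ω : ℝ) (hα0 : 0 < α) (hα1 : α ≤ 1) :
    ∀ θ ∈ Set.Ioo 0 (α * π / 2),
      HasDerivAt (Lam α β γ ω)
        (((Real.sin (α * π / 2) / (α * Real.sin θ * Real.sin (α * π / 2 - θ)) : ℝ) : ℂ) *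
          (((β : ℝ) : ℂ) - ((α * γ : ℝ) : ℂ) *
            ((Real.sin (α * π / 2 - θ) / Real.sin (α * π / 2) : ℝ) : ℂ) *
            Complex.exp (-(Complex.I * (θ : ℂ)))) *
          Lam α β γ ω θ) θ := by
  rintro θ ⟨hθ0, hθa⟩
  have hαπ : α * π / 2 ≤ π / 2 := by nlinarith [pi_pos]
  have hsinθ : 0 < Real.sin θ := sin_pos_of_pos_of_lt_pi hθ0 (by linarith [pi_pos])
  have hsin_sub : 0 < Real.sin (α * π / 2 - θ) := sin_pos_of_pos_of_lt_pi (by linarith) (by linarith)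
  have hsin_a : 0 < Real.sin (α * π / 2) := sin_pos_of_pos_of_lt_pi (by linarith) (by linarith [pi_pos])
  refine (hasDerivAt_lam hsinθ.ne' hsin_sub.ne').congr_deriv (congrArg (· * Lam α β γ ω θ) ?_)
  rw [exp_neg_I_mul, ← ofReal_cos, ← ofReal_sin]
  -- opaque sines keep `field_simp` from normalising their arguments
  generalize Real.sin θ = s₁ at hsinθ ⊢
  generalize Real.sin (α * π / 2 - θ) = s₂ at hsin_sub ⊢
  generalize Real.sin (α * π / 2) = S at hsin_a ⊢
  have : (s₁ : ℂ) ≠ 0 := by exact_mod_cast hsinθ.ne'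
  have : (s₂ : ℂ) ≠ 0 := by exact_mod_cast hsin_sub.ne'
  have : (S : ℂ) ≠ 0 := by exact_mod_cast hsin_a.ne'
  have : (α : ℂ) ≠ 0 := by exact_mod_cast hα0.ne'
  push_cast
  field_simp
  ring

theorem lam_hasDerivAt (α β γ ω : ℝ) (hω : ω < 0) (hα0 : 0 < α) (hα1 : α ≤ 1)
    (hαγ : 0 < α * γ) (hβ0 : α * γ ≤ β) (hβ1 : β ≤ 1) :
    ∀ θ ∈ Set.Ioo 0 (α * π / 2),
      HasDerivAt (Lam α β γ ω)
        (((Real.sin (α * π / 2) / (α * Real.sin θ * Real.sin (α * π / 2 - θ)) : ℝ) : ℂ) *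
          (((β : ℝ) : ℂ) - ((α * γ : ℝ) : ℂ) *
            ((Real.sin (α * π / 2 - θ) / Real.sin (α * π / 2) : ℝ) : ℂ) *
            Complex.exp (-(Complex.I * (θ : ℂ)))) *
          Lam α β γ ω θ) θ :=
  lam_hasDerivAt_general α β γ ω hα0 hα1
end

section
/- Let ω < 0, 0 < α ≤ 1 and 0 < αγ ≤ β ≤ 1, and let A ∈ ℂ. For every s ∈ ℂ with Re(s) > 0 and |A| < |F(s)|, the transfer function H(s) = s^(β−αγ−1)·(s^α − ω)^γ / (F(s) − A) admits the convergent series representation H(s) = Σ_{j=0}^∞ A^j · s^(αγj − jβ − 1) · (s^α − ω)^(−jγ), where all powers are principal-branch complex powers. -/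
open Real Complex Filter Set Topology

/-- The transfer function H(s) = s^(β-αγ-1)(s^α-ω)^γ / (F(s) - A). -/
noncomputable def Hc (α β γ ω : ℝ) (A : ℂ) (s : ℂ) : ℂ :=
  s ^ ((β - α * γ - 1 : ℝ) : ℂ) * (s ^ ((α : ℝ) : ℂ) - (ω : ℂ)) ^ ((γ : ℝ) : ℂ) /
    (Fc α β γ ω s - A)

/-! The terms of the series are `A ^ j / F(s) ^ j · s⁻¹` in disguise, so this is the geometric series
in `A / F(s)`, which converges because `|A| < |F(s)|`; its sum `F(s) / (F(s) - A) · s⁻¹` is `H(s)`. -/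

theorem hasSum_pow_mul_inv_pow {𝕜 : Type*} [NormedField 𝕜] [CompleteSpace 𝕜] {a b : 𝕜}
    (h : ‖a‖ < ‖b‖) : HasSum (fun j : ℕ => a ^ j * (b ^ j)⁻¹) (b / (b - a)) := by
  have hb : b ≠ 0 := norm_pos_iff.mp ((norm_nonneg a).trans_lt h)
  have hab : ‖a * b⁻¹‖ < 1 := by
    rwa [norm_mul, norm_inv, mul_inv_lt_iff₀ (norm_pos_iff.mpr hb), one_mul]
  convert hasSum_geometric_of_norm_lt_one hab using 1
  · ext j
    rw [mul_pow, inv_pow]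
  · rw [← div_eq_mul_inv, one_sub_div hb, inv_div]

namespace Complex

theorem cpow_ofReal_neg_natCast_mul (x : ℂ) (r : ℝ) (j : ℕ) :
    x ^ ((-(j * r) : ℝ) : ℂ) = ((x ^ (r : ℂ)) ^ j)⁻¹ := by
  push_cast
  rw [cpow_neg, cpow_nat_mul]

theorem cpow_ofReal_sub_one {x : ℂ} (hx : x ≠ 0) (r : ℝ) :
    x ^ ((r - 1 : ℝ) : ℂ) = x ^ (r : ℂ) * x⁻¹ := by
  push_cast
  rw [cpow_sub _ _ hx, cpow_one, div_eq_mul_inv]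

end Complex

theorem H_series_large_s_general (α β γ ω : ℝ) (A : ℂ) :
    ∀ s : ℂ, 0 < s.re → ‖A‖ < ‖Fc α β γ ω s‖ →
      HasSum
        (fun j : ℕ => A ^ j * s ^ ((α * γ * j - j * β - 1 : ℝ) : ℂ) *
          (s ^ ((α : ℝ) : ℂ) - (ω : ℂ)) ^ ((-(j * γ) : ℝ) : ℂ))
        (Hc α β γ ω A s) := by
  intro s hs hA
  have hs0 : s ≠ 0 := by rintro rfl; simp at hs
  have hterm : ∀ j : ℕ, A ^ j * s ^ ((α * γ * j - j * β - 1 : ℝ) : ℂ) *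
      (s ^ ((α : ℝ) : ℂ) - (ω : ℂ)) ^ ((-(j * γ) : ℝ) : ℂ) =
        A ^ j * (Fc α β γ ω s ^ j)⁻¹ * s⁻¹ := by
    intro j
    rw [show α * γ * j - j * β - 1 = -(j * (β - α * γ)) - 1 by ring,
      cpow_ofReal_sub_one hs0, cpow_ofReal_neg_natCast_mul, cpow_ofReal_neg_natCast_mul, Fc,
      mul_pow, mul_inv]
    ring
  have hH : Hc α β γ ω A s = Fc α β γ ω s / (Fc α β γ ω s - A) * s⁻¹ := by
    rw [Hc, cpow_ofReal_sub_one hs0, Fc]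
    ring
  simpa only [hterm, hH] using (hasSum_pow_mul_inv_pow hA).mul_right s⁻¹

theorem H_series_large_s (α β γ ω : ℝ) (hω : ω < 0) (hα0 : 0 < α) (hα1 : α ≤ 1)
    (hαγ : 0 < α * γ) (hβ0 : α * γ ≤ β) (hβ1 : β ≤ 1) (A : ℂ) :
    ∀ s : ℂ, 0 < s.re → ‖A‖ < ‖Fc α β γ ω s‖ →
      HasSum
        (fun j : ℕ => A ^ j * s ^ ((α * γ * j - j * β - 1 : ℝ) : ℂ) *
          (s ^ ((α : ℝ) : ℂ) - (ω : ℂ)) ^ ((-(j * γ) : ℝ) : ℂ))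
        (Hc α β γ ω A s) :=
  H_series_large_s_general α β γ ω A
end

section
/- Let ω < 0, 0 < α ≤ 1 and 0 < αγ ≤ β ≤ 1, and let A ∈ ℂ, A ≠ 0. For every s ∈ ℂ with Re(s) > 0 and 0 < |F(s)| < |A|, the transfer function H(s) = s^(β−αγ−1)·(s^α − ω)^γ / (F(s) − A) admits the convergent series representation H(s) = − Σ_{k=1}^∞ A^(−k) · s^(kβ − kαγ − 1) · (s^α − ω)^(kγ), where all powers are principal-branch complex powers. -/
open Real Complex Filter Set Topology

/-!
With `F = Fc α β γ ω s` one has `H(s) = s⁻¹ F / (F - A)`, and the `k`-th term of the series is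
`-s⁻¹ (F / A) ^ k`, because `s ^ (k (β - αγ) - 1) (s ^ α - ω) ^ (k γ) = s⁻¹ F ^ k` for `s ≠ 0`
(integer multiples of an exponent split off as natural powers even for principal branches).
The expansion is then the geometric series in `F / A`, which converges since `‖F‖ < ‖A‖`.
-/

theorem hasSum_neg_zpow_mul_pow_of_norm_lt {z A : ℂ} (h : ‖z‖ < ‖A‖) :
    HasSum (fun k : ℕ => -(A ^ (-((k : ℤ) + 1)) * z ^ (k + 1))) (z / (z - A)) := by
  have hA : A ≠ 0 := norm_pos_iff.mp ((norm_nonneg z).trans_lt h)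
  have hr : ‖z / A‖ < 1 := by
    rwa [norm_div, div_lt_one (norm_pos_iff.mpr hA)]
  have hzA : z - A ≠ 0 := fun hz => h.ne (by rw [sub_eq_zero.mp hz])
  have hAz : A - z ≠ 0 := fun hz => hzA (by linear_combination -hz)
  have hterm : ∀ k : ℕ, -(A ^ (-((k : ℤ) + 1)) * z ^ (k + 1)) = -(z / A) * (z / A) ^ k := by
    intro k
    rw [show -((k : ℤ) + 1) = -((k + 1 : ℕ) : ℤ) by push_cast; ring, zpow_neg, zpow_natCast]
    ring
  have hsum : -(z / A) * (1 - z / A)⁻¹ = z / (z - A) := by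
    field_simp
    ring
  rw [← hsum]
  exact ((hasSum_geometric_of_norm_lt_one hr).mul_left (-(z / A))).congr_fun hterm

section

variable {α β γ ω : ℝ} {s : ℂ}

theorem Hc_eq_Fc_mul_inv_div (hs : s ≠ 0) (A : ℂ) :
    Hc α β γ ω A s = Fc α β γ ω s * s⁻¹ / (Fc α β γ ω s - A) := by
  rw [Hc, Fc, Complex.ofReal_sub, Complex.ofReal_one, Complex.cpow_sub _ _ hs, Complex.cpow_one]
  ring

theorem cpow_mul_cpow_eq_Fc_pow_mul_inv (hs : s ≠ 0) (n : ℕ) :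
    s ^ ((n * β - n * α * γ - 1 : ℝ) : ℂ) * (s ^ ((α : ℝ) : ℂ) - (ω : ℂ)) ^ ((n * γ : ℝ) : ℂ) =
      Fc α β γ ω s ^ n * s⁻¹ := by
  have hexp : ((n * β - n * α * γ - 1 : ℝ) : ℂ) = n * ((β - α * γ : ℝ) : ℂ) - 1 := by
    push_cast; ring
  rw [hexp, Complex.cpow_sub _ _ hs, Complex.cpow_one, Complex.cpow_nat_mul,
    Complex.ofReal_mul, Complex.ofReal_natCast, Complex.cpow_nat_mul, Fc, mul_pow]
  ring

end

theorem H_series_small_s_general (α β γ ω : ℝ) (A : ℂ) :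
    ∀ s : ℂ, 0 < s.re → 0 < ‖Fc α β γ ω s‖ →
      ‖Fc α β γ ω s‖ < ‖A‖ →
      HasSum
        (fun k : ℕ => -(A ^ (-((k : ℤ) + 1)) *
          s ^ (((k + 1 : ℕ) * β - (k + 1 : ℕ) * α * γ - 1 : ℝ) : ℂ) *
          (s ^ ((α : ℝ) : ℂ) - (ω : ℂ)) ^ (((k + 1 : ℕ) * γ : ℝ) : ℂ)))
        (Hc α β γ ω A s) := by
  intro s hs _ hFA
  have hs0 : s ≠ 0 := fun h => by simp [h] at hs
  rw [Hc_eq_Fc_mul_inv_div hs0, mul_div_right_comm, mul_comm]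
  refine ((hasSum_neg_zpow_mul_pow_of_norm_lt hFA).mul_left s⁻¹).congr_fun fun k => ?_
  rw [mul_assoc, cpow_mul_cpow_eq_Fc_pow_mul_inv hs0]
  ring

theorem H_series_small_s (α β γ ω : ℝ) (hω : ω < 0) (hα0 : 0 < α) (hα1 : α ≤ 1)
    (hαγ : 0 < α * γ) (hβ0 : α * γ ≤ β) (hβ1 : β ≤ 1) (A : ℂ) (hA : A ≠ 0) :
    ∀ s : ℂ, 0 < s.re → 0 < ‖Fc α β γ ω s‖ →
      ‖Fc α β γ ω s‖ < ‖A‖ →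
      HasSum
        (fun k : ℕ => -(A ^ (-((k : ℤ) + 1)) *
          s ^ (((k + 1 : ℕ) * β - (k + 1 : ℕ) * α * γ - 1 : ℝ) : ℂ) *
          (s ^ ((α : ℝ) : ℂ) - (ω : ℂ)) ^ (((k + 1 : ℕ) * γ : ℝ) : ℂ)))
        (Hc α β γ ω A s) :=
  H_series_small_s_general α β γ ω A
end
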